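/- arXiv:2604.00632 — 2 statements merged into one kernel-verified Lean document; each statement's English description precedes it below -/
import Mathlib

section
/- Let d, p ≥ 1, let t₀ ≤ t₁ be real numbers, let f : ℝ^d × ℝ^p → ℝ^d be continuously differentiable, and let z : ℝ × ℝ^p → ℝ^d be twice continuously differentiable with ∂z/∂t (t, θ) = f(z(t, θ), θ) for all (t, θ) and with a θ-independent initial condition z(t₀, θ) = z₀ ∈ ℝ^d for all θ. Let L : ℝ^d → ℝ be differentiable. Fix θ ∈ ℝ^p and let a : ℝ → L(ℝ^d, ℝ) be a differentiable solution of the adjoint equation a′(t) = − a(t) ∘ D_z f(z(t, θ), θ) on [t₀, t₁] with terminal condition a(t₁) = DL(z(t₁, θ)). Then the map θ ↦ L(z(t₁, θ)) is differentiable at θ, and its Fréchet derivative equals the integral ∫_{t₀}^{t₁} a(t) ∘ D_θ f(z(t, θ), θ) dt ∈ L(ℝ^p, ℝ). -/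
/-- Adjoint sensitivity parameter-gradient formula: with a θ-independent
initial condition, the gradient of the terminal loss with respect to the
parameters is `∫_{t₀}^{t₁} a(t) ∘ D_θ f(z(t, θ), θ) dt`, where `a` solves
the adjoint equation backward from the terminal loss gradient. -/
theorem adjoint_parameter_gradient
    (d p : ℕ) (hd : 1 ≤ d) (hp : 1 ≤ p)
    (t₀ t₁ : ℝ) (ht : t₀ ≤ t₁)
    (f : (Fin d → ℝ) × (Fin p → ℝ) → (Fin d → ℝ)) (hf : ContDiff ℝ 1 f)
    (z : ℝ × (Fin p → ℝ) → (Fin d → ℝ)) (hz : ContDiff ℝ 2 z)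
    (hode : ∀ (t : ℝ) (θ : Fin p → ℝ),
      HasDerivAt (fun s : ℝ => z (s, θ)) (f (z (t, θ), θ)) t)
    (z₀ : Fin d → ℝ) (hinit : ∀ θ : Fin p → ℝ, z (t₀, θ) = z₀)
    (L : (Fin d → ℝ) → ℝ) (hL : Differentiable ℝ L)
    (θ : Fin p → ℝ)
    (a : ℝ → (Fin d → ℝ) →L[ℝ] ℝ)
    (ha : ∀ t ∈ Set.Icc t₀ t₁,
      HasDerivAt a (-((a t).comp (fderiv ℝ (fun w => f (w, θ)) (z (t, θ))))) t)
    (haT : a t₁ = fderiv ℝ L (z (t₁, θ))) :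
    HasFDerivAt (fun θ' : Fin p → ℝ => L (z (t₁, θ')))
      (∫ t in t₀..t₁, (a t).comp (fderiv ℝ (fun θ' => f (z (t, θ), θ')) θ)) θ := by
  classical
  have hz1 : ContDiff ℝ 1 z := hz.of_le one_le_two
  have hzd : Differentiable ℝ z := hz1.differentiable one_ne_zero
  have hfd : Differentiable ℝ f := hf.differentiable one_ne_zero
  set F : (ℝ × (Fin p → ℝ)) → (ℝ × (Fin p → ℝ)) →L[ℝ] (Fin d → ℝ) := fderiv ℝ z with hF
  have hFc : ContDiff ℝ 1 F := hz.fderiv_right (by norm_num)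
  have hFd : Differentiable ℝ F := hFc.differentiable one_ne_zero
  set ι : (Fin p → ℝ) →L[ℝ] ℝ × (Fin p → ℝ) := ContinuousLinearMap.inr ℝ ℝ _ with hι
  set J : ℝ → (Fin p → ℝ) →L[ℝ] (Fin d → ℝ) := fun t => (F (t, θ)).comp ι with hJdef
  -- derivative of θ' ↦ (t, θ')
  have hpair : ∀ (t : ℝ) (θ₀ : Fin p → ℝ),
      HasFDerivAt (fun θ' : Fin p → ℝ => ((t, θ') : ℝ × (Fin p → ℝ))) ι θ₀ := by
    intro t θ₀
    exact (hasFDerivAt_const t θ₀).prodMk (hasFDerivAt_id θ₀)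
  -- derivative of θ' ↦ z (t, θ') at θ is J t
  have hJ : ∀ t : ℝ, HasFDerivAt (fun θ' => z (t, θ')) (J t) θ := fun t =>
    (hzd (t, θ)).hasFDerivAt.comp θ (hpair t θ)
  -- partial derivative in time: F (t, θ') (1, 0) = f (z (t, θ'), θ')
  have hzt : ∀ (t : ℝ) (θ' : Fin p → ℝ), F (t, θ') (1, 0) = f (z (t, θ'), θ') := by
    intro t θ'
    have h1 : HasDerivAt (fun s : ℝ => z (s, θ')) (F (t, θ') (1, 0)) t :=
      (hzd (t, θ')).hasFDerivAt.comp_hasDerivAt t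
        ((hasDerivAt_id t).prodMk (hasDerivAt_const t θ'))
    exact h1.unique (hode t θ')
  -- derivative of t ↦ F (t, θ)
  have hFt : ∀ t : ℝ, HasDerivAt (fun s : ℝ => F (s, θ)) (fderiv ℝ F (t, θ) (1, 0)) t :=
    fun t => (hFd (t, θ)).hasFDerivAt.comp_hasDerivAt t
      ((hasDerivAt_id t).prodMk (hasDerivAt_const t θ))
  -- derivative of J
  have hJ' : ∀ t : ℝ, HasDerivAt J ((fderiv ℝ F (t, θ) (1, 0)).comp ι) t := by
    intro t
    have h := (hFt t).clm_comp (hasDerivAt_const t ι)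
    simpa using h
  -- partial derivatives of f
  have hDz : ∀ t : ℝ, fderiv ℝ (fun w => f (w, θ)) (z (t, θ))
      = (fderiv ℝ f (z (t, θ), θ)).comp (ContinuousLinearMap.inl ℝ _ _) := by
    intro t
    have hp1 : HasFDerivAt (fun w : Fin d → ℝ => ((w, θ) : (Fin d → ℝ) × (Fin p → ℝ)))
        (ContinuousLinearMap.inl ℝ _ _) (z (t, θ)) := by
      exact (hasFDerivAt_id (z (t, θ))).prodMk (hasFDerivAt_const θ (z (t, θ)))
    exact ((hfd (z (t, θ), θ)).hasFDerivAt.comp (z (t, θ)) hp1).fderiv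
  have hDθ : ∀ t : ℝ, fderiv ℝ (fun θ' => f (z (t, θ), θ')) θ
      = (fderiv ℝ f (z (t, θ), θ)).comp
        (ContinuousLinearMap.inr ℝ (Fin d → ℝ) (Fin p → ℝ)) := by
    intro t
    have hp1 : HasFDerivAt (fun θ' : Fin p → ℝ => ((z (t, θ), θ') : (Fin d → ℝ) × (Fin p → ℝ)))
        (ContinuousLinearMap.inr ℝ _ _) θ := by
      exact (hasFDerivAt_const (z (t, θ)) θ).prodMk (hasFDerivAt_id θ)
    exact ((hfd (z (t, θ), θ)).hasFDerivAt.comp θ hp1).fderiv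
  -- the variational equation: J' t = D_z f ∘ J t + D_θ f
  have hkey : ∀ t : ℝ, (fderiv ℝ F (t, θ) (1, 0)).comp ι
      = (fderiv ℝ (fun w => f (w, θ)) (z (t, θ))).comp (J t)
        + fderiv ℝ (fun θ' => f (z (t, θ), θ')) θ := by
    intro t
    -- Two computations of the derivative of θ' ↦ F (t, θ') (1, 0) at θ
    have hA : HasFDerivAt (fun θ' : Fin p → ℝ => F (t, θ'))
        ((fderiv ℝ F (t, θ)).comp ι) θ :=
      (hFd (t, θ)).hasFDerivAt.comp θ (hpair t θ)
    have hA' : HasFDerivAt (fun θ' : Fin p → ℝ => F (t, θ') (1, 0))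
        (((fderiv ℝ F (t, θ)).comp ι).flip (1, 0)) θ := by
      have h := hA.clm_apply (hasFDerivAt_const ((1 : ℝ), (0 : Fin p → ℝ)) θ)
      simpa using h
    have hBp : HasFDerivAt (fun θ' : Fin p → ℝ =>
          ((z (t, θ'), θ') : (Fin d → ℝ) × (Fin p → ℝ)))
        ((J t).prod (ContinuousLinearMap.id ℝ (Fin p → ℝ))) θ :=
      (hJ t).prodMk (hasFDerivAt_id θ)
    have hB0 : HasFDerivAt (f ∘ fun θ' : Fin p → ℝ =>
          ((z (t, θ'), θ') : (Fin d → ℝ) × (Fin p → ℝ)))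
        ((fderiv ℝ f (z (t, θ), θ)).comp
          ((J t).prod (ContinuousLinearMap.id ℝ (Fin p → ℝ)))) θ :=
      HasFDerivAt.comp θ (hfd (z (t, θ), θ)).hasFDerivAt hBp
    have hB : HasFDerivAt (fun θ' : Fin p → ℝ => f (z (t, θ'), θ'))
        ((fderiv ℝ f (z (t, θ), θ)).comp
          ((J t).prod (ContinuousLinearMap.id ℝ (Fin p → ℝ)))) θ := hB0
    have hAB : (((fderiv ℝ F (t, θ)).comp ι).flip (1, 0))
        = (fderiv ℝ f (z (t, θ), θ)).comp
          ((J t).prod (ContinuousLinearMap.id ℝ (Fin p → ℝ))) := by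
      have heq : (fun θ' : Fin p → ℝ => F (t, θ') (1, 0))
          = fun θ' : Fin p → ℝ => f (z (t, θ'), θ') := funext fun θ' => hzt t θ'
      exact (heq ▸ hA').unique hB
    -- symmetry of the second derivative of z
    have hsymm : ∀ v w : ℝ × (Fin p → ℝ),
        fderiv ℝ F (t, θ) v w = fderiv ℝ F (t, θ) w v :=
      second_derivative_symmetric (fun y => (hzd y).hasFDerivAt)
        (hFd (t, θ)).hasFDerivAt
    ext w
    have h1 : fderiv ℝ F (t, θ) (1, 0) (ι w) = fderiv ℝ F (t, θ) (ι w) (1, 0) :=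
      hsymm _ _
    have h2 : fderiv ℝ F (t, θ) (ι w) (1, 0)
        = fderiv ℝ f (z (t, θ), θ) (J t w, w) := by
      have := congrArg (fun (T : (Fin p → ℝ) →L[ℝ] (Fin d → ℝ)) => T w) hAB
      simpa using this
    have h3 : (J t w, w) = ((J t w, 0) : (Fin d → ℝ) × (Fin p → ℝ)) + (0, w) := by
      simp
    simp only [ContinuousLinearMap.comp_apply, ContinuousLinearMap.add_apply]
    rw [h1, h2, hDz t, hDθ t, h3, map_add]
    simp
  -- the function g t = a t ∘ J t and its derivative
  set g : ℝ → (Fin p → ℝ) →L[ℝ] ℝ := fun t => (a t).comp (J t) with hgdef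
  have hg : ∀ t ∈ Set.Icc t₀ t₁,
      HasDerivAt g ((a t).comp (fderiv ℝ (fun θ' => f (z (t, θ), θ')) θ)) t := by
    intro t htt
    have h := (ha t htt).clm_comp (hJ' t)
    convert h using 1
    rw [hkey t]
    ext w
    simp
  -- continuity / integrability of the integrand
  have hacont : ContinuousOn a (Set.Icc t₀ t₁) := fun t htt =>
    ((ha t htt).continuousAt).continuousWithinAt
  have hzc : Continuous fun t : ℝ => z (t, θ) :=
    hz1.continuous.comp (continuous_id.prodMk continuous_const)
  have hDfc : Continuous fun t : ℝ => fderiv ℝ f (z (t, θ), θ) :=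
    (hf.continuous_fderiv one_ne_zero).comp (hzc.prodMk continuous_const)
  have hDθc : Continuous fun t : ℝ => fderiv ℝ (fun θ' => f (z (t, θ), θ')) θ := by
    simp only [hDθ]
    exact hDfc.clm_comp continuous_const
  have hint : IntervalIntegrable
      (fun t => (a t).comp (fderiv ℝ (fun θ' => f (z (t, θ), θ')) θ))
      MeasureTheory.volume t₀ t₁ := by
    apply ContinuousOn.intervalIntegrable
    rw [Set.uIcc_of_le ht]
    exact hacont.clm_comp hDθc.continuousOn
  -- fundamental theorem of calculus
  have hftc : (∫ t in t₀..t₁, (a t).comp (fderiv ℝ (fun θ' => f (z (t, θ), θ')) θ))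
      = g t₁ - g t₀ := by
    apply intervalIntegral.integral_eq_sub_of_hasDerivAt _ hint
    intro t htt
    rw [Set.uIcc_of_le ht] at htt
    exact hg t htt
  -- J t₀ = 0 from the θ-independent initial condition
  have hJ0 : J t₀ = 0 := by
    have h2 : HasFDerivAt (fun θ' : Fin p → ℝ => z (t₀, θ'))
        (0 : (Fin p → ℝ) →L[ℝ] (Fin d → ℝ)) θ := by
      simp only [hinit]
      exact hasFDerivAt_const z₀ θ
    exact (hJ t₀).unique h2
  have hg0 : g t₀ = 0 := by
    simp [hgdef, hJ0]
  have hval : (∫ t in t₀..t₁, (a t).comp (fderiv ℝ (fun θ' => f (z (t, θ), θ')) θ))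
      = (a t₁).comp (J t₁) := by
    rw [hftc, hg0, sub_zero]
  rw [hval, haT]
  exact (hL (z (t₁, θ))).hasFDerivAt.comp θ (hJ t₁)
end

section
/- Let d ≥ 1, let t₀ ≤ t₁ be real numbers, let f : ℝ^d → ℝ^d be continuously differentiable, and let z : ℝ × ℝ^d → ℝ^d be twice continuously differentiable with ∂z/∂t (t, x) = f(z(t, x)) for all (t, x) and with z(t₀, x) = x for all x ∈ ℝ^d. Let L : ℝ^d → ℝ be differentiable. Fix x₀ ∈ ℝ^d and let a : ℝ → L(ℝ^d, ℝ) be a differentiable solution of the adjoint equation a′(t) = − a(t) ∘ Df(z(t, x₀)) on [t₀, t₁] with terminal condition a(t₁) = DL(z(t₁, x₀)). Then the map x ↦ L(z(t₁, x)) is differentiable at x₀ and its Fréchet derivative at x₀ equals a(t₀). -/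
/-- Adjoint sensitivity input-gradient formula: integrating the adjoint
equation backward from the terminal loss gradient yields the gradient of the
loss with respect to the initial state: `a(t₀) = dL/dx`. -/
theorem adjoint_input_gradient
    (d : ℕ) (hd : 1 ≤ d)
    (t₀ t₁ : ℝ) (ht : t₀ ≤ t₁)
    (f : (Fin d → ℝ) → (Fin d → ℝ)) (hf : ContDiff ℝ 1 f)
    (z : ℝ × (Fin d → ℝ) → (Fin d → ℝ)) (hz : ContDiff ℝ 2 z)
    (hode : ∀ (t : ℝ) (x : Fin d → ℝ),
      HasDerivAt (fun s : ℝ => z (s, x)) (f (z (t, x))) t)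
    (hinit : ∀ x : Fin d → ℝ, z (t₀, x) = x)
    (L : (Fin d → ℝ) → ℝ) (hL : Differentiable ℝ L)
    (x₀ : Fin d → ℝ)
    (a : ℝ → (Fin d → ℝ) →L[ℝ] ℝ)
    (ha : ∀ t ∈ Set.Icc t₀ t₁,
      HasDerivAt a (-((a t).comp (fderiv ℝ f (z (t, x₀))))) t)
    (haT : a t₁ = fderiv ℝ L (z (t₁, x₀))) :
    HasFDerivAt (fun x : Fin d → ℝ => L (z (t₁, x))) (a t₀) x₀ := by
  have hzd : Differentiable ℝ z := hz.differentiable (by norm_num)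
  have hF : ContDiff ℝ 1 (fderiv ℝ z) := hz.fderiv_right (by norm_num)
  have hJ : ∀ t : ℝ, HasFDerivAt (fun x : Fin d → ℝ => z (t, x))
      ((fderiv ℝ z (t, x₀)).comp (ContinuousLinearMap.inr ℝ ℝ (Fin d → ℝ))) x₀ :=
    fun t => (hzd (t, x₀)).hasFDerivAt.comp x₀ (hasFDerivAt_prodMk_right t x₀)
  set J : ℝ → (Fin d → ℝ) →L[ℝ] (Fin d → ℝ) :=
    fun t => (fderiv ℝ z (t, x₀)).comp (ContinuousLinearMap.inr ℝ ℝ (Fin d → ℝ)) with hJdef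
  -- time derivative of z equals full derivative applied to (1,0)
  have hpt : ∀ p : ℝ × (Fin d → ℝ), fderiv ℝ z p (1, 0) = f (z p) := by
    rintro ⟨t, x⟩
    have h1 : HasDerivAt (fun s : ℝ => z (s, x)) (fderiv ℝ z (t, x) (1, 0)) t := by
      have := (hzd (t, x)).hasFDerivAt.comp_hasDerivAt t
        ((hasDerivAt_id t).prodMk (hasDerivAt_const t x))
      simpa [Function.comp_def] using this
    exact h1.unique (hode t x)
  -- the variational (linearized) ODE for J
  have hJvar : ∀ t : ℝ,
      HasDerivAt J ((fderiv ℝ f (z (t, x₀))).comp (J t)) t := by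
    intro t
    have hsym : IsSymmSndFDerivAt ℝ z (t, x₀) :=
      hz.contDiffAt.isSymmSndFDerivAt (by simp)
    set D := fderiv ℝ (fderiv ℝ z) (t, x₀) with hD
    have hA : HasDerivAt (fun s : ℝ => fderiv ℝ z (s, x₀)) (D (1, 0)) t := by
      have := ((hF.differentiable one_ne_zero) (t, x₀)).hasFDerivAt.comp_hasDerivAt t
        ((hasDerivAt_id t).prodMk (hasDerivAt_const t x₀))
      simpa [Function.comp_def] using this
    have hG : HasDerivAt J
        ((D (1, 0)).comp (ContinuousLinearMap.inr ℝ ℝ (Fin d → ℝ))) t := by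
      have := hA.clm_comp (hasDerivAt_const t (ContinuousLinearMap.inr ℝ ℝ (Fin d → ℝ)))
      simpa using this
    have hkey : (D (1, 0)).comp (ContinuousLinearMap.inr ℝ ℝ (Fin d → ℝ))
        = (fderiv ℝ f (z (t, x₀))).comp (J t) := by
      refine ContinuousLinearMap.ext fun v => ?_
      have h1 : D (1, 0) (0, v) = D (0, v) (1, 0) := hsym (1, 0) (0, v)
      have hxF : HasFDerivAt (fun x : Fin d → ℝ => fderiv ℝ z (t, x))
          (D.comp (ContinuousLinearMap.inr ℝ ℝ (Fin d → ℝ))) x₀ :=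
        ((hF.differentiable one_ne_zero) (t, x₀)).hasFDerivAt.comp x₀
          (hasFDerivAt_prodMk_right t x₀)
      have hev : HasFDerivAt
          (fun x : Fin d → ℝ => fderiv ℝ z (t, x) ((1 : ℝ), (0 : Fin d → ℝ)))
          ((ContinuousLinearMap.apply ℝ (Fin d → ℝ) ((1 : ℝ), (0 : Fin d → ℝ))).comp
            (D.comp (ContinuousLinearMap.inr ℝ ℝ (Fin d → ℝ)))) x₀ :=
        (ContinuousLinearMap.apply ℝ (Fin d → ℝ)
          ((1 : ℝ), (0 : Fin d → ℝ))).hasFDerivAt.comp x₀ hxF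
      have hfz : HasFDerivAt (fun x : Fin d → ℝ => f (z (t, x)))
          ((fderiv ℝ f (z (t, x₀))).comp (J t)) x₀ :=
        (hf.differentiable one_ne_zero (z (t, x₀))).hasFDerivAt.comp x₀ (hJ t)
      have heq : (fun x : Fin d → ℝ => fderiv ℝ z (t, x) ((1 : ℝ), (0 : Fin d → ℝ)))
          = fun x : Fin d → ℝ => f (z (t, x)) := funext fun x => hpt (t, x)
      have huniq := (heq ▸ hev).unique hfz
      have h2 := congrFun (congrArg (DFunLike.coe) huniq) v
      simpa [h1] using h2
    exact hkey ▸ hG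
  set g : ℝ → (Fin d → ℝ) →L[ℝ] ℝ := fun t => (a t).comp (J t) with hg
  have hgderiv : ∀ t ∈ Set.Icc t₀ t₁, HasDerivAt g 0 t := by
    intro t htt
    have hc := (ha t htt).clm_comp (hJvar t)
    have h0 : (-((a t).comp (fderiv ℝ f (z (t, x₀))))).comp (J t)
        + (a t).comp ((fderiv ℝ f (z (t, x₀))).comp (J t)) = 0 := by
      rw [ContinuousLinearMap.neg_comp, ← ContinuousLinearMap.comp_assoc]
      exact neg_add_cancel _
    rwa [h0] at hc
  have hconst : g t₁ = g t₀ :=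
    constant_of_has_deriv_right_zero
      (fun t htt => (hgderiv t htt).continuousAt.continuousWithinAt)
      (fun t htt => ((hgderiv t (Set.mem_Icc_of_Ico htt)).hasDerivWithinAt))
      t₁ (Set.right_mem_Icc.2 ht)
  have hJ0 : J t₀ = ContinuousLinearMap.id ℝ (Fin d → ℝ) := by
    have hid : HasFDerivAt (fun x : Fin d → ℝ => z (t₀, x))
        (ContinuousLinearMap.id ℝ (Fin d → ℝ)) x₀ := by
      have hzx : (fun x : Fin d → ℝ => z (t₀, x)) = id := funext hinit
      rw [hzx]; exact hasFDerivAt_id x₀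
    exact (hJ t₀).unique hid
  have hg0 : g t₀ = a t₀ := by rw [hg]; simp [hJ0]
  have hfinal : HasFDerivAt (fun x : Fin d → ℝ => L (z (t₁, x))) (g t₁) x₀ := by
    have hc := (hL (z (t₁, x₀))).hasFDerivAt.comp x₀ (hJ t₁)
    simpa [hg, haT, Function.comp_def] using hc
  rwa [hconst, hg0] at hfinal
end
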